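/- arXiv:2311.12013 — 4 statements merged into one kernel-verified Lean document; each statement's English description precedes it below -/
import Mathlib

section
/- Let x ≥ 0, Γ ≥ 0 and 0 ≤ γ < 1 be real numbers such that x ≤ Γ(1 + x^γ). Then x ≤ 2^(1/(1-γ)) (Γ + Γ^(1/(1-γ))). -/
open Real

theorem le_rpow_of_le_mul_rpow {x c γ : ℝ} (hx : 0 < x) (hγ : γ < 1) (h : x ≤ c * x ^ γ) :
    x ≤ c ^ (1 / (1 - γ)) := by
  have hγ' : 0 < 1 - γ := sub_pos.mpr hγ
  have hpow : x ^ (1 - γ) ≤ c := by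
    rw [rpow_sub hx, rpow_one, div_le_iff₀ (rpow_pos_of_pos hx γ)]
    exact h
  calc x = (x ^ (1 - γ)) ^ (1 / (1 - γ)) := by
        rw [← rpow_mul hx.le, mul_one_div_cancel hγ'.ne', rpow_one]
    _ ≤ c ^ (1 / (1 - γ)) := by gcongr

theorem stmt0 (x Γ γ : ℝ) (hx : 0 ≤ x) (hΓ : 0 ≤ Γ) (hγ0 : 0 ≤ γ) (hγ1 : γ < 1)
    (h : x ≤ Γ * (1 + x ^ γ)) :
    x ≤ 2 ^ (1 / (1 - γ)) * (Γ + Γ ^ (1 / (1 - γ))) := by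
  set p := 1 / (1 - γ)
  have hp : 1 ≤ p := by
    rw [le_div_iff₀ (sub_pos.mpr hγ1)]
    linarith
  have h2p : 2 ≤ (2 : ℝ) ^ p := by
    simpa using rpow_le_rpow_of_exponent_le one_le_two hp
  have hΓp : 0 ≤ Γ ^ p := rpow_nonneg hΓ p
  rcases le_or_gt x 1 with hx1 | hx1
  · calc x ≤ Γ * (1 + 1) := h.trans (by gcongr; exact rpow_le_one hx hx1 hγ0)
      _ = 2 * Γ := by ring
      _ ≤ 2 ^ p * Γ := by gcongr
      _ ≤ 2 ^ p * (Γ + Γ ^ p) := by gcongr; linarith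
  · have hx2Γ : x ≤ 2 * Γ * x ^ γ := by
      calc x ≤ Γ * (x ^ γ + x ^ γ) := h.trans (by gcongr; exact one_le_rpow hx1.le hγ0)
        _ = 2 * Γ * x ^ γ := by ring
    calc x ≤ (2 * Γ) ^ p := le_rpow_of_le_mul_rpow (by linarith) hγ1 hx2Γ
      _ = 2 ^ p * Γ ^ p := mul_rpow zero_le_two hΓ
      _ ≤ 2 ^ p * (Γ + Γ ^ p) := by gcongr; linarith
end

section
/- Let α, β > 0 and γ ∈ (0,1) satisfy αγ + β(1-γ) > 1-γ. Suppose X : [0,1] → ℝ is continuous with X(0) = 0, f : [0,1] → ℝ is γ-Hölder continuous with f(0) = 0, the function t ↦ |X(t)|^(−α) 1_{0<|X(t)|<1} t^(−β) + 1_{X(t)=0, t>0} t^(−2) is Lebesgue integrable on [0,1], and X(t) = −∫₀ᵗ (sign(X(s))|X(s)|^(−α) 1_{0<|X(s)|<1} s^(−β) + 1_{X(s)=0, s>0} s^(−2)) ds + f(t) for all t ∈ [0,1]. Then a contradiction follows; i.e., no such continuous X exists. -/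
/-!
Near `0` we have `|X| < 1`. If `|X s| ≤ C s^l` there, then on the last excursion `(u, t]` of `X`
away from `0` before time `t` the drift pushes `X` towards `0` with strength at least
`C^{-α} t^{-(αl+β)}`. Integrating over `(u, t]` and comparing with the Hölder bound
`K (t - u)^γ` for the increment of `f` gives `t - u ≲ t^{(αl+β)/(1-γ)}`, hence
`|X t| ≲ t^{γ(αl+β)/(1-γ)}`. The condition `αγ + β(1-γ) > 1-γ` says exactly that this
bootstrap raises `l` by a fixed amount as long as `αl + β ≤ 1`, so eventually `αl + β > 1`.
But then the integrand of `|drift|` is at least `c s^{-min(αl+β, 2)}` near `0` (the `s^{-2}` term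
taking over at the zeros of `X`), which is not integrable.
-/

open MeasureTheory Set Real

lemma Real.sign_mul_self_eq_abs (x : ℝ) : sign x * x = |x| := by
  rcases lt_trichotomy x 0 with hx | rfl | hx
  · rw [sign_of_neg hx, abs_of_neg hx, neg_one_mul]
  · simp
  · rw [sign_of_pos hx, abs_of_pos hx, one_mul]

lemma Real.abs_sign_le_one (x : ℝ) : |sign x| ≤ 1 := by
  rcases sign_apply_eq x with h | h | h <;> simp [h]

lemma Real.measurable_sign : Measurable Real.sign :=
  Measurable.ite measurableSet_Iio measurable_const <|
    Measurable.ite measurableSet_Ioi measurable_const measurable_const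

lemma zero_mem_uIcc_of_sign_ne {a b : ℝ} (ha : a ≠ 0) (hb : b ≠ 0) (h : sign a ≠ sign b) :
    (0 : ℝ) ∈ uIcc a b := by
  rcases ha.lt_or_gt with ha | ha <;> rcases hb.lt_or_gt with hb | hb
  · exact absurd (by rw [sign_of_neg ha, sign_of_neg hb]) h
  · exact mem_uIcc.2 (Or.inl ⟨ha.le, hb.le⟩)
  · exact mem_uIcc.2 (Or.inr ⟨hb.le, ha.le⟩)
  · exact absurd (by rw [sign_of_pos ha, sign_of_pos hb]) h

lemma exists_last_zero {X : ℝ → ℝ} {t : ℝ} (hX : ContinuousOn X (Icc 0 t)) (hX0 : X 0 = 0)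
    (ht : 0 ≤ t) (hXt : X t ≠ 0) :
    ∃ u ∈ Ico 0 t, X u = 0 ∧ ∀ s ∈ Ioc u t, sign (X s) = sign (X t) := by
  set Z := Icc 0 t ∩ X ⁻¹' {0}
  have hZ : IsCompact Z := isCompact_Icc.of_isClosed_subset
    (hX.preimage_isClosed_of_isClosed isClosed_Icc isClosed_singleton) inter_subset_left
  obtain ⟨⟨hu0, hut⟩, hXu⟩ : sSup Z ∈ Z := hZ.sSup_mem ⟨0, ⟨le_rfl, ht⟩, hX0⟩
  have hXne : ∀ s ∈ Ioc (sSup Z) t, X s ≠ 0 := fun s hs hXs =>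
    hs.1.not_ge (le_csSup hZ.bddAbove ⟨⟨hu0.trans hs.1.le, hs.2⟩, hXs⟩)
  refine ⟨sSup Z, ⟨hu0, hut.lt_of_ne fun h => hXt (h ▸ hXu)⟩, hXu, fun s hs => ?_⟩
  by_contra hsign
  have hsub : uIcc s t ⊆ Ioc (sSup Z) t := by
    rw [uIcc_of_le hs.2]; exact Icc_subset_Ioc_iff hs.2 |>.2 ⟨hs.1, le_rfl⟩
  have hXst : ContinuousOn X (uIcc s t) :=
    hX.mono (hsub.trans (Ioc_subset_Icc_self.trans (Icc_subset_Icc_left hu0)))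
  obtain ⟨c, hc, hXc⟩ :=
    intermediate_value_uIcc hXst (zero_mem_uIcc_of_sign_ne (hXne s hs) hXt hsign)
  exact hXne c (hsub hc) hXc

lemma abs_add_mul_le_of_le_sign_mul {g : ℝ → ℝ} {x y c u t : ℝ} (hut : u ≤ t)
    (hg : IntegrableOn g (Ioc u t)) (hc : ∀ s ∈ Ioc u t, c ≤ sign x * g s)
    (hx : x = -(∫ s in u..t, g s) + y) : |x| + c * (t - u) ≤ |y| := by
  have hlow : c * (t - u) ≤ sign x * ∫ s in u..t, g s := by
    rw [intervalIntegral.integral_of_le hut, ← integral_const_mul]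
    calc c * (t - u) = ∫ _ in Ioc u t, c := by
          rw [setIntegral_const, Real.volume_real_Ioc_of_le hut, smul_eq_mul, mul_comm]
      _ ≤ _ := setIntegral_mono_on (integrableOn_const measure_Ioc_lt_top.ne)
          (hg.const_mul _) measurableSet_Ioc hc
  have hy : sign x * y ≤ |y| := by
    calc sign x * y ≤ |sign x * y| := le_abs_self _
      _ ≤ |y| := by
        rw [abs_mul]; exact mul_le_of_le_one_left (abs_nonneg y) (abs_sign_le_one x)
  have : |x| = -(sign x * ∫ s in u..t, g s) + sign x * y := by
    rw [← sign_mul_self_eq_abs, hx]; ring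
  linarith

lemma le_mul_div_rpow_of_add_mul_le {x c d K γ : ℝ} (hx : 0 ≤ x) (hc : 0 < c) (hd : 0 < d)
    (hγ0 : 0 ≤ γ) (hγ1 : γ < 1) (h : x + c * d ≤ K * d ^ γ) :
    x ≤ K * (K / c) ^ (γ / (1 - γ)) := by
  have hdγ : 0 < d ^ γ := rpow_pos_of_pos hd γ
  have hK : 0 < K := pos_of_mul_pos_left (by nlinarith [mul_pos hc hd]) hdγ.le
  have hd1 : d ^ (1 - γ) ≤ K / c := by
    rw [le_div_iff₀ hc]
    refine le_of_mul_le_mul_right ?_ hdγ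
    calc d ^ (1 - γ) * c * d ^ γ = c * d := by
          rw [mul_right_comm, ← rpow_add hd, sub_add_cancel, rpow_one, mul_comm]
      _ ≤ K * d ^ γ := by linarith
  have hdγ' : d ^ γ ≤ (K / c) ^ (γ / (1 - γ)) := by
    calc d ^ γ = (d ^ (1 - γ)) ^ (γ / (1 - γ)) := by
          rw [← rpow_mul hd.le, mul_div_cancel₀ _ (sub_ne_zero.2 hγ1.ne')]
      _ ≤ _ := rpow_le_rpow (by positivity) hd1 (div_nonneg hγ0 (sub_nonneg.2 hγ1.le))
  nlinarith [mul_le_mul_of_nonneg_left hdγ' hK.le, mul_pos hc hd]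

lemma rpow_mul_rpow_le_of_le_mul_rpow {α β l C x s t : ℝ} (hα : 0 ≤ α) (hβ : 0 ≤ β)
    (hl : 0 ≤ l) (hC : 0 < C) (hx : 0 < x) (hxs : x ≤ C * s ^ l) (hs : 0 < s) (hst : s ≤ t) :
    C ^ (-α) * t ^ (-(α * l + β)) ≤ x ^ (-α) * s ^ (-β) := by
  have ht : 0 < t := hs.trans_le hst
  calc C ^ (-α) * t ^ (-(α * l + β)) = (C * t ^ l) ^ (-α) * t ^ (-β) := by
        rw [mul_rpow hC.le (rpow_nonneg ht.le _), ← rpow_mul ht.le, mul_assoc, ← rpow_add ht]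
        ring_nf
    _ ≤ x ^ (-α) * s ^ (-β) := by
        refine mul_le_mul (rpow_le_rpow_of_nonpos hx (hxs.trans (by gcongr)) (neg_nonpos.2 hα))
          (rpow_le_rpow_of_nonpos hs hst (neg_nonpos.2 hβ)) (rpow_nonneg ht.le _)
          (rpow_nonneg hx.le _)

lemma not_integrableOn_of_mul_rpow_le {H : ℝ → ℝ} {c ρ ε : ℝ} (hε : 0 < ε) (hc : 0 < c)
    (hρ : 1 ≤ ρ) (hH : ∀ s ∈ Ioc 0 ε, c * s ^ (-ρ) ≤ H s) : ¬ IntegrableOn H (Ioc 0 ε) := by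
  intro hint
  have : IntegrableOn (fun s => s ^ (-ρ)) (Ioo 0 ε) := by
    refine IntegrableOn.mono_set ?_ Ioo_subset_Ioc_self
    refine (hint.const_mul c⁻¹).mono' (measurable_id.pow_const _).aestronglyMeasurable ?_
    filter_upwards [ae_restrict_mem measurableSet_Ioc] with s hs
    rw [norm_of_nonneg (rpow_nonneg hs.1.le _), le_inv_mul_iff₀ hc]
    exact hH s hs
  rw [intervalIntegral.integrableOn_Ioo_rpow_iff hε] at this
  linarith

lemma exists_lt_of_forall_exists_add_le {P : ℝ → Prop} {a M η : ℝ} (hη : 0 < η) (ha : P a)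
    (h : ∀ l, a ≤ l → l ≤ M → P l → ∃ l', l + η ≤ l' ∧ P l') : ∃ l, a ≤ l ∧ M < l ∧ P l := by
  by_contra! hM
  have hn : ∀ n : ℕ, ∃ l, a + n * η ≤ l ∧ P l := by
    intro n
    induction n with
    | zero => exact ⟨a, by simp, ha⟩
    | succ n ih =>
      obtain ⟨l, hl, hPl⟩ := ih
      have hla : a ≤ l := le_trans (le_add_of_nonneg_right (by positivity)) hl
      obtain ⟨l', hl', hPl'⟩ := h l hla (not_lt.1 fun hlt => hM l hla hlt hPl) hPl
      exact ⟨l', by push_cast; linarith, hPl'⟩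
  obtain ⟨n, hn'⟩ := exists_nat_gt ((M - a) / η)
  obtain ⟨l, hl, hPl⟩ := hn n
  rw [div_lt_iff₀ hη] at hn'
  exact hM l (le_trans (le_add_of_nonneg_right (by positivity)) hl) (by linarith) hPl

lemma exists_pos_add_le_exponent {α β γ : ℝ} (hα : 0 < α) (hβ : 0 < β) (hγ0 : 0 < γ)
    (hγ1 : γ < 1) (hcond : α * γ + β * (1 - γ) > 1 - γ) :
    ∃ η > 0, ∀ l, 0 ≤ l → l ≤ (1 - β) / α → l + η ≤ γ * (α * l + β) / (1 - γ) := by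
  have h1γ : 0 < 1 - γ := sub_pos.2 hγ1
  -- `γ (αl + β) - (1 - γ) l = γβ + (αγ - (1 - γ)) l` is affine in `l`, with values `γβ` at `l = 0`
  -- and `(αγ + β(1 - γ) - (1 - γ)) / α` at `αl + β = 1`; `hcond` makes the latter positive.
  refine ⟨min (γ * β) ((α * γ + β * (1 - γ) - (1 - γ)) / α) / (1 - γ), by positivity, ?_⟩
  intro l hl0 hlM
  rw [le_div_iff₀' hα] at hlM
  rw [le_div_iff₀ h1γ, add_mul, div_mul_cancel₀ _ h1γ.ne']
  rcases le_total (1 - γ) (α * γ) with h | h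
  · nlinarith [min_le_left (γ * β) ((α * γ + β * (1 - γ) - (1 - γ)) / α)]
  · have hm := min_le_right (γ * β) ((α * γ + β * (1 - γ) - (1 - γ)) / α)
    rw [le_div_iff₀ hα] at hm
    nlinarith

lemma exists_abs_lt_one_of_continuousWithinAt {X : ℝ → ℝ}
    (hX : ContinuousWithinAt X (Icc 0 1) 0) (hX0 : X 0 = 0) :
    ∃ ε, 0 < ε ∧ ε ≤ 1 ∧ ∀ s ∈ Ioc 0 ε, |X s| < 1 := by
  obtain ⟨δ, hδ, hXδ⟩ := Metric.continuousWithinAt_iff.1 hX 1 one_pos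
  refine ⟨min (δ / 2) 1, by positivity, min_le_right _ _, fun s hs => ?_⟩
  have hsδ : s < δ := hs.2.trans_lt ((min_le_left _ _).trans_lt (half_lt_self hδ))
  simpa [hX0, Real.dist_eq, abs_of_pos hs.1, hsδ] using
    hXδ ⟨hs.1.le, hs.2.trans (min_le_right _ _)⟩

noncomputable def drift (α β x s : ℝ) : ℝ :=
  sign x * |x| ^ (-α) * (if 0 < |x| ∧ |x| < 1 then 1 else 0) * s ^ (-β)
    + if x = 0 ∧ 0 < s then s ^ (-2 : ℝ) else 0

noncomputable def absDrift (α β x s : ℝ) : ℝ :=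
  |x| ^ (-α) * (if 0 < |x| ∧ |x| < 1 then 1 else 0) * s ^ (-β)
    + if x = 0 ∧ 0 < s then s ^ (-2 : ℝ) else 0

section

variable {α β x s : ℝ}

lemma abs_drift (hs : 0 ≤ s) : |drift α β x s| = absDrift α β x s := by
  by_cases hx : x = 0
  · subst hx
    simp only [drift, absDrift, sign_zero, abs_zero, lt_irrefl, false_and, if_false, mul_zero,
      zero_mul, zero_add, true_and]
    exact abs_of_nonneg (by split_ifs <;> positivity)
  · have hsx : |sign x| = 1 := by
      rcases sign_apply_eq_of_ne_zero x hx with h | h <;> simp [h]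
    simp only [drift, absDrift, hx, false_and, if_false, add_zero]
    rw [abs_mul, abs_mul, abs_mul, hsx, one_mul, abs_of_nonneg (rpow_nonneg (abs_nonneg x) _),
      abs_of_nonneg (rpow_nonneg hs _)]
    split_ifs <;> simp

lemma sign_mul_drift (hx : x ≠ 0) (hx1 : |x| < 1) :
    sign x * drift α β x s = |x| ^ (-α) * s ^ (-β) := by
  have hsx : sign x * sign x = 1 := by
    rcases sign_apply_eq_of_ne_zero x hx with h | h <;> simp [h]
  simp only [drift, abs_pos.2 hx, hx1, hx, and_self, false_and, if_true, if_false]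
  linear_combination (|x| ^ (-α) * s ^ (-β)) * hsx

lemma absDrift_of_ne_zero (hx : x ≠ 0) (hx1 : |x| < 1) :
    absDrift α β x s = |x| ^ (-α) * s ^ (-β) := by
  simp [absDrift, hx, hx1]

lemma absDrift_zero (hs : 0 < s) : absDrift α β 0 s = s ^ (-2 : ℝ) := by
  simp [absDrift, hs]

end

lemma measurable_drift (α β : ℝ) : Measurable (Function.uncurry (drift α β)) := by
  refine ((((Real.measurable_sign.comp measurable_fst).mul (measurable_fst.abs.pow_const _)).mul
    (Measurable.ite ?_ measurable_const measurable_const)).mul (measurable_snd.pow_const _)).add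
    (Measurable.ite ?_ (measurable_snd.pow_const _) measurable_const)
  · exact (measurableSet_lt measurable_const measurable_fst.abs).inter
      (measurableSet_lt measurable_fst.abs measurable_const)
  · exact (measurableSet_eq_fun measurable_fst measurable_const).inter
      (measurableSet_lt measurable_const measurable_snd)

lemma integrableOn_drift_of_integrableOn_absDrift {α β : ℝ} {X : ℝ → ℝ} {S : Set ℝ}
    (hS : MeasurableSet S) (hS0 : S ⊆ Ici 0) (hX : ContinuousOn X S)
    (h : IntegrableOn (fun s => absDrift α β (X s) s) S) :
    IntegrableOn (fun s => drift α β (X s) s) S := by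
  refine h.mono' ((measurable_drift α β).comp_aemeasurable
    ((hX.aemeasurable hS).prodMk aemeasurable_id)).aestronglyMeasurable ?_
  filter_upwards [ae_restrict_mem hS] with s hs
  rw [norm_eq_abs, abs_drift (hS0 hs)]

lemma min_mul_rpow_le_absDrift {α β l C x s : ℝ} (hα : 0 ≤ α) (hβ : 0 ≤ β) (hl : 0 ≤ l) (hC : 0 < C)
    (hs0 : 0 < s) (hs1 : s ≤ 1) (hx1 : |x| < 1) (hxC : |x| ≤ C * s ^ l) :
    min (C ^ (-α)) 1 * s ^ (-min (α * l + β) 2) ≤ absDrift α β x s := by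
  by_cases hx : x = 0
  · rw [hx, absDrift_zero hs0, ← one_mul (s ^ (-2 : ℝ))]
    exact mul_le_mul (min_le_right _ _)
      (rpow_le_rpow_of_exponent_ge hs0 hs1 (neg_le_neg (min_le_right _ _)))
      (rpow_nonneg hs0.le _) zero_le_one
  · rw [absDrift_of_ne_zero hx hx1]
    calc min (C ^ (-α)) 1 * s ^ (-min (α * l + β) 2) ≤ C ^ (-α) * s ^ (-(α * l + β)) :=
          mul_le_mul (min_le_left _ _)
            (rpow_le_rpow_of_exponent_ge hs0 hs1 (neg_le_neg (min_le_left _ _)))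
            (rpow_nonneg hs0.le _) (rpow_pos_of_pos hC _).le
      _ ≤ |x| ^ (-α) * s ^ (-β) :=
          rpow_mul_rpow_le_of_le_mul_rpow hα hβ hl hC (abs_pos.2 hx) hxC hs0 le_rfl

lemma abs_le_mul_rpow_of_abs_le_mul_rpow {α β γ K ε C l : ℝ} {X f : ℝ → ℝ} (hα : 0 ≤ α)
    (hβ : 0 ≤ β) (hγ0 : 0 ≤ γ) (hγ1 : γ < 1) (hK : 0 ≤ K) (hX : ContinuousOn X (Icc 0 ε))
    (hX0 : X 0 = 0) (hX1 : ∀ s ∈ Ioc 0 ε, |X s| < 1)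
    (hf : ∀ s ∈ Icc 0 ε, ∀ t ∈ Icc 0 ε, |f t - f s| ≤ K * |t - s| ^ γ)
    (hg : IntegrableOn (fun s => drift α β (X s) s) (Icc 0 ε))
    (heq : ∀ t ∈ Icc 0 ε, X t = -(∫ s in 0..t, drift α β (X s) s) + f t)
    (hC : 0 < C) (hl : 0 ≤ l) (hb : ∀ s ∈ Ioc 0 ε, |X s| ≤ C * s ^ l) {t : ℝ}
    (ht : t ∈ Ioc 0 ε) :
    |X t| ≤ K * (K * C ^ α) ^ (γ / (1 - γ)) * t ^ (γ * (α * l + β) / (1 - γ)) := by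
  obtain ⟨ht0, htε⟩ := ht
  by_cases hXt : X t = 0
  · rw [hXt, abs_zero]; positivity
  obtain ⟨u, ⟨hu0, hut⟩, hXu, hsign⟩ :=
    exists_last_zero (hX.mono (Icc_subset_Icc_right htε)) hX0 ht0.le hXt
  have hsub : Ioc u t ⊆ Ioc 0 ε := Ioc_subset_Ioc hu0 htε
  set c := C ^ (-α) * t ^ (-(α * l + β)) with hc_def
  have hc : ∀ s ∈ Ioc u t, c ≤ sign (X t) * drift α β (X s) s := by
    intro s hs
    have hXs : X s ≠ 0 := fun h =>
      hXt (sign_eq_zero_iff.1 ((hsign s hs).symm.trans (by rw [h, sign_zero])))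
    rw [← hsign s hs, sign_mul_drift hXs (hX1 s (hsub hs))]
    exact rpow_mul_rpow_le_of_le_mul_rpow hα hβ hl hC (abs_pos.2 hXs) (hb s (hsub hs))
      (hu0.trans_lt hs.1) hs.2
  have hu : u ∈ Icc 0 ε := ⟨hu0, hut.le.trans htε⟩
  have ht : t ∈ Icc 0 ε := ⟨ht0.le, htε⟩
  have hincr : X t = -(∫ s in u..t, drift α β (X s) s) + (f t - f u) := by
    have hint : ∀ v ∈ Icc 0 ε, IntervalIntegrable (fun s => drift α β (X s) s) volume 0 v :=
      fun v hv => (hg.mono_set (by rw [uIcc_of_le hv.1]; exact Icc_subset_Icc_right hv.2)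
        ).intervalIntegrable
    rw [← intervalIntegral.integral_interval_sub_left (hint t ht) (hint u hu)]
    linarith [heq t ht, heq u hu]
  have hmain := abs_add_mul_le_of_le_sign_mul hut.le
    (hg.mono_set (hsub.trans Ioc_subset_Icc_self)) hc hincr
  have hf' : |f t - f u| ≤ K * (t - u) ^ γ := by
    simpa [abs_of_pos (sub_pos.2 hut)] using hf u hu t ht
  have := le_mul_div_rpow_of_add_mul_le (abs_nonneg _) (by positivity) (sub_pos.2 hut) hγ0 hγ1
    (hmain.trans hf')
  have hKc : K / c = K * C ^ α * t ^ (α * l + β) := by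
    rw [hc_def, rpow_neg hC.le, rpow_neg ht0.le]; field_simp
  rw [hKc, mul_rpow (by positivity) (by positivity), ← rpow_mul ht0.le, ← mul_assoc] at this
  convert this using 3
  ring

theorem stmt1_general (α β γ K : ℝ) (hα : 0 < α) (hβ : 0 < β) (hγ0 : 0 < γ) (hγ1 : γ < 1)
    (hcond : α * γ + β * (1 - γ) > 1 - γ)
    (X f : ℝ → ℝ)
    (hXc : ContinuousOn X (Set.Icc 0 1))
    (hX0 : X 0 = 0)
    (hfHolder : ∀ s ∈ Set.Icc (0:ℝ) 1, ∀ t ∈ Set.Icc (0:ℝ) 1,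
      |f t - f s| ≤ K * |t - s| ^ γ)
    (hint : IntegrableOn
      (fun s => |X s| ^ (-α) * (if 0 < |X s| ∧ |X s| < 1 then (1:ℝ) else 0) * s ^ (-β)
        + (if X s = 0 ∧ 0 < s then s ^ (-2 : ℝ) else 0)) (Set.Icc 0 1))
    (heq : ∀ t ∈ Set.Icc (0:ℝ) 1,
      X t = -(∫ s in (0:ℝ)..t,
          (Real.sign (X s) * |X s| ^ (-α) * (if 0 < |X s| ∧ |X s| < 1 then (1:ℝ) else 0) * s ^ (-β)
            + (if X s = 0 ∧ 0 < s then s ^ (-2 : ℝ) else 0)))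
        + f t) :
    False := by
  obtain ⟨ε, hε0, hε1, hX1⟩ :=
    exists_abs_lt_one_of_continuousWithinAt (hXc 0 ⟨le_rfl, zero_le_one⟩) hX0
  have hsub : Icc 0 ε ⊆ Icc 0 1 := Icc_subset_Icc_right hε1
  have hf : ∀ s ∈ Icc 0 ε, ∀ t ∈ Icc 0 ε, |f t - f s| ≤ max K 1 * |t - s| ^ γ :=
    fun s hs t ht => (hfHolder s (hsub hs) t (hsub ht)).trans (by gcongr; exact le_max_left _ _)
  have hg : IntegrableOn (fun s => drift α β (X s) s) (Icc 0 ε) :=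
    (integrableOn_drift_of_integrableOn_absDrift measurableSet_Icc (fun _ hs => hs.1) hXc
      hint).mono_set hsub
  obtain ⟨η, hη, hexp⟩ := exists_pos_add_le_exponent hα hβ hγ0 hγ1 hcond
  obtain ⟨l, hl0, hlM, C, hC, hb⟩ := exists_lt_of_forall_exists_add_le
    (P := fun l => ∃ C > 0, ∀ s ∈ Ioc 0 ε, |X s| ≤ C * s ^ l) (a := 0) (M := (1 - β) / α) hη
    ⟨1, one_pos, fun s hs => by simpa using (hX1 s hs).le⟩ <| by
      rintro l hl0 hlM ⟨C, hC, hb⟩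
      exact ⟨_, hexp l hl0 hlM, max K 1 * (max K 1 * C ^ α) ^ (γ / (1 - γ)), by positivity,
        fun t ht => abs_le_mul_rpow_of_abs_le_mul_rpow hα.le hβ.le hγ0.le hγ1 (by positivity)
          (hXc.mono hsub) hX0 hX1 hf hg (fun t ht => heq t (hsub ht)) hC hl0 hb ht⟩
  have hρ : 1 < min (α * l + β) 2 :=
    lt_min (by rw [div_lt_iff₀' hα] at hlM; linarith) one_lt_two
  exact not_integrableOn_of_mul_rpow_le hε0 (lt_min (rpow_pos_of_pos hC _) one_pos) hρ.le
    (fun s hs => min_mul_rpow_le_absDrift hα.le hβ.le hl0 hC hs.1 (hs.2.trans hε1) (hX1 s hs)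
      (hb s hs))
    (hint.mono_set (Ioc_subset_Icc_self.trans hsub))

theorem stmt1 (α β γ K : ℝ) (hα : 0 < α) (hβ : 0 < β) (hγ0 : 0 < γ) (hγ1 : γ < 1)
    (hK : 0 ≤ K)
    (hcond : α * γ + β * (1 - γ) > 1 - γ)
    (X f : ℝ → ℝ)
    (hXc : ContinuousOn X (Set.Icc 0 1))
    (hX0 : X 0 = 0) (hf0 : f 0 = 0)
    (hfHolder : ∀ s ∈ Set.Icc (0:ℝ) 1, ∀ t ∈ Set.Icc (0:ℝ) 1,
      |f t - f s| ≤ K * |t - s| ^ γ)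
    (hint : IntegrableOn
      (fun s => |X s| ^ (-α) * (if 0 < |X s| ∧ |X s| < 1 then (1:ℝ) else 0) * s ^ (-β)
        + (if X s = 0 ∧ 0 < s then s ^ (-2 : ℝ) else 0)) (Set.Icc 0 1))
    (heq : ∀ t ∈ Set.Icc (0:ℝ) 1,
      X t = -(∫ s in (0:ℝ)..t,
          (Real.sign (X s) * |X s| ^ (-α) * (if 0 < |X s| ∧ |X s| < 1 then (1:ℝ) else 0) * s ^ (-β)
            + (if X s = 0 ∧ 0 < s then s ^ (-2 : ℝ) else 0)))
        + f t) :
    False :=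
  stmt1_general α β γ K hα hβ hγ0 hγ1 hcond X f hXc hX0 hfHolder hint heq
end

section
/- Taming singularities lemma: Let (E,d) be a metric space, T > 0, and let τ₁ > η₁ ≥ 0, τ₂ > η₂ ≥ 0, Γ₁, Γ₂ > 0. Suppose Y : (0,T] → E is continuous and satisfies d(Y_s, Y_t) ≤ Γ₁ s^(−η₁)(t−s)^{τ₁} + Γ₂ s^(−η₂)(t−s)^{τ₂} for all 0 < s ≤ t ≤ T. Then there exists a constant C depending only on τ₁, η₁, τ₂, η₂, T such that d(Y_s, Y_t) ≤ C(Γ₁ (t−s)^{τ₁−η₁} + Γ₂ (t−s)^{τ₂−η₂}) for all 0 ≤ s ≤ t ≤ T, where Y_0 is defined as the limit of Y_s as s → 0 (which exists). -/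
/-!
Where `t ≤ 2 s`, the singular factor is harmless: `s ^ (-η) * (t - s) ^ τ ≤ (t - s) ^ (τ - η)`
because `t - s ≤ s`. Where `t > 2 s`, go from `t` to `s` through the dyadic points `t / 2`,
`t / 4`, …; each step is of the first kind, and the moduli of the steps decay geometrically, so
they sum to a multiple of the modulus of `t - s`. The resulting uniform modulus makes `Y`
Cauchy at `0`, which gives `Y₀`, and the bound passes to the limit.
-/

open Filter Set Topology

section Chaining

variable {E : Type*} [PseudoMetricSpace E] {f : ℝ → E} {ω : ℝ → ℝ} {T r K : ℝ}

theorem dist_le_of_dyadic_chain (hω : MonotoneOn ω (Ici 0)) (hr₀ : 0 ≤ r) (hr : r < 1)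
    (hhalf : ∀ h, 0 < h → ω (h / 2) ≤ r * ω h)
    (hf : ∀ s t, 0 < s → s ≤ t → t ≤ T → t ≤ 2 * s → dist (f s) (f t) ≤ ω (t - s))
    {s t : ℝ} (hs : 0 < s) (hst : s ≤ t) (htT : t ≤ T) :
    dist (f s) (f t) ≤ (1 - r)⁻¹ * ω t := by
  have hc : 1 ≤ (1 - r)⁻¹ := (one_le_inv₀ (by linarith)).2 (by linarith)
  -- the choice `c = (1 - r)⁻¹` makes `c * ω (t / 2) + ω (t / 2) ≤ c * ω t`, so the bound
  -- reproduces itself along the chain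
  have hcr : ((1 - r)⁻¹ + 1) * r ≤ (1 - r)⁻¹ := by
    have : (1 - r)⁻¹ * (1 - r) = 1 := inv_mul_cancel₀ (by linarith)
    nlinarith
  obtain ⟨n, hn⟩ := pow_unbounded_of_one_lt (t / s) one_lt_two
  induction n generalizing t with
  | zero =>
    rw [pow_zero, div_lt_one hs] at hn
    exact absurd hst hn.not_ge
  | succ n ih =>
    rcases le_or_gt t (2 * s) with h2 | h2
    · have hdist := hf s t hs hst htT h2
      have hmono : ω (t - s) ≤ ω t :=
        hω (sub_nonneg.2 hst) (mem_Ici.2 (hs.trans_le hst).le) (by linarith)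
      nlinarith [dist_nonneg (x := f s) (y := f t)]
    · have hm : t - t / 2 = t / 2 := by ring
      have hleft := ih (t := t / 2) (by linarith) (by linarith) (by
        rw [div_div, div_lt_iff₀ (by positivity)]
        rw [div_lt_iff₀ hs, pow_succ] at hn
        linarith)
      have hright := hf (t / 2) t (by linarith) (by linarith) htT (by linarith)
      rw [hm] at hright
      have hhalf_t := hhalf t (by linarith)
      have hωt : 0 ≤ ω t := calc
        0 ≤ ω (t / 2) := dist_nonneg.trans hright
        _ ≤ ω t := hω (mem_Ici.2 (by linarith)) (mem_Ici.2 (by linarith)) (by linarith)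
      calc dist (f s) (f t) ≤ dist (f s) (f (t / 2)) + dist (f (t / 2)) (f t) :=
            dist_triangle _ _ _
        _ ≤ ((1 - r)⁻¹ + 1) * ω (t / 2) := by linarith
        _ ≤ ((1 - r)⁻¹ + 1) * (r * ω t) := by gcongr
        _ ≤ (1 - r)⁻¹ * ω t := by nlinarith

theorem dist_le_of_dyadic_chain_of_doubling (hω : MonotoneOn ω (Ici 0)) (hr₀ : 0 ≤ r)
    (hr : r < 1) (hhalf : ∀ h, 0 < h → ω (h / 2) ≤ r * ω h) (hK : 1 ≤ K)
    (hdouble : ∀ h, 0 < h → ω (2 * h) ≤ K * ω h)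
    (hf : ∀ s t, 0 < s → s ≤ t → t ≤ T → t ≤ 2 * s → dist (f s) (f t) ≤ ω (t - s))
    {s t : ℝ} (hs : 0 < s) (hst : s ≤ t) (htT : t ≤ T) :
    dist (f s) (f t) ≤ (1 - r)⁻¹ * K * ω (t - s) := by
  have hc : 1 ≤ (1 - r)⁻¹ := (one_le_inv₀ (by linarith)).2 (by linarith)
  rcases le_or_gt t (2 * s) with h2 | h2
  · have hdist := hf s t hs hst htT h2
    have hcK : 1 ≤ (1 - r)⁻¹ * K := by nlinarith
    nlinarith [dist_nonneg (x := f s) (y := f t)]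
  · calc dist (f s) (f t) ≤ (1 - r)⁻¹ * ω t := dist_le_of_dyadic_chain hω hr₀ hr hhalf hf hs hst htT
      _ ≤ (1 - r)⁻¹ * ω (2 * (t - s)) := by
          gcongr
          exact hω (mem_Ici.2 (by linarith)) (mem_Ici.2 (by linarith)) (by linarith)
      _ ≤ (1 - r)⁻¹ * (K * ω (t - s)) := by gcongr; exact hdouble _ (by linarith)
      _ = (1 - r)⁻¹ * K * ω (t - s) := by ring

end Chaining

section Limit

variable {E : Type*} [PseudoMetricSpace E] {f : ℝ → E} {ω : ℝ → ℝ}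

theorem exists_tendsto_nhdsWithin_of_dist_le [CompleteSpace E] {S : Set ℝ} (a : ℝ)
    (hω : Tendsto ω (𝓝 0) (𝓝 0))
    (hf : ∀ s ∈ S, ∀ t ∈ S, s ≤ t → dist (f s) (f t) ≤ ω (t - s)) :
    ∃ y, Tendsto f (𝓝[S] a) (𝓝 y) := by
  rcases (𝓝[S] a).eq_or_neBot with hS | hS
  · exact ⟨f a, by simp [hS]⟩
  refine cauchy_map_iff_exists_tendsto.1 (cauchy_map_iff'.2 ?_)
  have hsymm : ∀ s ∈ S, ∀ t ∈ S, dist (f s) (f t) ≤ ω |s - t| := by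
    intro s hs t ht
    rcases le_total s t with hst | hts
    · rw [abs_sub_comm, abs_of_nonneg (sub_nonneg.2 hst)]
      exact hf s hs t ht hst
    · rw [dist_comm, abs_of_nonneg (sub_nonneg.2 hts)]
      exact hf t ht s hs hts
  have hgap : Tendsto (fun p : ℝ × ℝ => |p.1 - p.2|) (𝓝[S] a ×ˢ 𝓝[S] a) (𝓝 0) := by
    have : Tendsto (fun p : ℝ × ℝ => |p.1 - p.2|) (𝓝 (a, a)) (𝓝 |a - a|) :=
      (continuous_fst.sub continuous_snd).abs.tendsto _
    rw [sub_self, abs_zero] at this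
    exact this.mono_left <| (Filter.prod_mono nhdsWithin_le_nhds nhdsWithin_le_nhds).trans_eq
      nhds_prod_eq.symm
  rw [tendsto_uniformity_iff_dist_tendsto_zero]
  refine squeeze_zero' (Eventually.of_forall fun _ => dist_nonneg) ?_ (hω.comp hgap)
  filter_upwards [prod_mem_prod self_mem_nhdsWithin self_mem_nhdsWithin] with p hp
  exact hsymm p.1 hp.1 p.2 hp.2

theorem exists_tendsto_nhdsWithin_Ioc_and_dist_le [CompleteSpace E] {T : ℝ}
    (hω : Tendsto ω (𝓝 0) (𝓝 0)) (hmono : MonotoneOn ω (Ici 0))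
    (hf : ∀ s t, 0 < s → s ≤ t → t ≤ T → dist (f s) (f t) ≤ ω (t - s)) :
    ∃ y, Tendsto f (𝓝[Ioc 0 T] 0) (𝓝 y) ∧ ∀ s t, 0 ≤ s → s ≤ t → t ≤ T →
      dist (if s = 0 then y else f s) (if t = 0 then y else f t) ≤ ω (t - s) := by
  obtain ⟨y, hy⟩ := exists_tendsto_nhdsWithin_of_dist_le (S := Ioc 0 T) 0 hω
    fun s hs t ht hst => hf s t hs.1 hst ht.2
  refine ⟨y, hy, fun s t hs hst htT => ?_⟩
  rcases hs.eq_or_lt with rfl | hs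
  · rcases hst.eq_or_lt with rfl | ht
    · have hω₀ : ω 0 = 0 :=
        tendsto_nhds_unique (tendsto_pure_nhds ω 0) (hω.mono_left (pure_le_nhds 0))
      simp [hω₀]
    · have := left_nhdsWithin_Ioc_neBot (ht.trans_le htT)
      rw [if_pos rfl, if_neg ht.ne', sub_zero]
      refine le_of_tendsto (hy.dist tendsto_const_nhds) ?_
      filter_upwards [self_mem_nhdsWithin, mem_nhdsWithin_of_mem_nhds (Iio_mem_nhds ht)]
        with u hu hut
      exact (hf u t hu.1 hut.le htT).trans
        (hmono (mem_Ici.2 (sub_nonneg.2 hut.le)) (mem_Ici.2 ht.le) (by linarith [hu.1]))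
  · simp only [hs.ne', (hs.trans_le hst).ne', if_false]
    exact hf s t hs hst htT

end Limit

theorem rpow_neg_mul_rpow_le_rpow_sub {s h η τ : ℝ} (hη : 0 ≤ η) (hh : 0 < h) (hhs : h ≤ s) :
    s ^ (-η) * h ^ τ ≤ h ^ (τ - η) := calc
  s ^ (-η) * h ^ τ ≤ h ^ (-η) * h ^ τ := mul_le_mul_of_nonneg_right
    (Real.rpow_le_rpow_of_nonpos hh hhs (neg_nonpos.2 hη)) (Real.rpow_nonneg hh.le τ)
  _ = h ^ (τ - η) := by rw [← Real.rpow_add hh, neg_add_eq_sub]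

section PowerModulus

variable {Γ₁ Γ₂ a₁ a₂ : ℝ}

theorem monotoneOn_mul_rpow_add_mul_rpow (hΓ₁ : 0 ≤ Γ₁) (hΓ₂ : 0 ≤ Γ₂) (ha₁ : 0 ≤ a₁)
    (ha₂ : 0 ≤ a₂) : MonotoneOn (fun h : ℝ => Γ₁ * h ^ a₁ + Γ₂ * h ^ a₂) (Ici 0) := by
  intro x hx y _ hxy
  dsimp only
  have hx : 0 ≤ x := hx
  gcongr

theorem tendsto_mul_rpow_add_mul_rpow (ha₁ : 0 < a₁) (ha₂ : 0 < a₂) :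
    Tendsto (fun h : ℝ => Γ₁ * h ^ a₁ + Γ₂ * h ^ a₂) (𝓝 0) (𝓝 0) := by
  have hpow : ∀ a : ℝ, 0 < a → Tendsto (fun h : ℝ => h ^ a) (𝓝 0) (𝓝 0) := fun a ha => by
    simpa [Real.zero_rpow ha.ne'] using (Real.continuousAt_rpow_const 0 a (Or.inr ha.le)).tendsto
  simpa using ((hpow a₁ ha₁).const_mul Γ₁).add ((hpow a₂ ha₂).const_mul Γ₂)

theorem mul_rpow_add_mul_rpow_mul_le {c h : ℝ} (hΓ₁ : 0 ≤ Γ₁) (hΓ₂ : 0 ≤ Γ₂) (hc : 0 ≤ c)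
    (hh : 0 ≤ h) : Γ₁ * (c * h) ^ a₁ + Γ₂ * (c * h) ^ a₂ ≤
      max (c ^ a₁) (c ^ a₂) * (Γ₁ * h ^ a₁ + Γ₂ * h ^ a₂) := calc
  Γ₁ * (c * h) ^ a₁ + Γ₂ * (c * h) ^ a₂ = Γ₁ * (c ^ a₁ * h ^ a₁) + Γ₂ * (c ^ a₂ * h ^ a₂) := by
    rw [Real.mul_rpow hc hh, Real.mul_rpow hc hh]
  _ ≤ Γ₁ * (max (c ^ a₁) (c ^ a₂) * h ^ a₁) + Γ₂ * (max (c ^ a₁) (c ^ a₂) * h ^ a₂) := by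
    gcongr
    exacts [le_max_left _ _, le_max_right _ _]
  _ = max (c ^ a₁) (c ^ a₂) * (Γ₁ * h ^ a₁ + Γ₂ * h ^ a₂) := by ring

end PowerModulus

/-- `(1 - r)⁻¹ * K`, where `r < 1` and `K` bound how `h ↦ Γ₁ * h ^ a₁ + Γ₂ * h ^ a₂` scales
when `h` is halved and doubled. -/
noncomputable def dyadicChainConst (a₁ a₂ : ℝ) : ℝ :=
  (1 - max ((2 : ℝ)⁻¹ ^ a₁) ((2 : ℝ)⁻¹ ^ a₂))⁻¹ * max ((2 : ℝ) ^ a₁) ((2 : ℝ) ^ a₂)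

section PowerChaining

variable {Γ₁ Γ₂ a₁ a₂ : ℝ}

theorem max_inv_two_rpow_lt_one (ha₁ : 0 < a₁) (ha₂ : 0 < a₂) :
    max ((2 : ℝ)⁻¹ ^ a₁) ((2 : ℝ)⁻¹ ^ a₂) < 1 :=
  max_lt (Real.rpow_lt_one (by norm_num) (by norm_num) ha₁)
    (Real.rpow_lt_one (by norm_num) (by norm_num) ha₂)

theorem one_le_max_two_rpow (ha₁ : 0 ≤ a₁) : 1 ≤ max ((2 : ℝ) ^ a₁) ((2 : ℝ) ^ a₂) :=
  le_max_of_le_left (Real.one_le_rpow one_le_two ha₁)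

theorem dyadicChainConst_pos (ha₁ : 0 < a₁) (ha₂ : 0 < a₂) : 0 < dyadicChainConst a₁ a₂ :=
  mul_pos (inv_pos.2 (sub_pos.2 (max_inv_two_rpow_lt_one ha₁ ha₂)))
    (zero_lt_one.trans_le (one_le_max_two_rpow ha₁.le))

variable {E : Type*} [PseudoMetricSpace E] {f : ℝ → E} {T : ℝ}

theorem dist_le_dyadicChainConst_mul (ha₁ : 0 < a₁) (ha₂ : 0 < a₂) (hΓ₁ : 0 ≤ Γ₁)
    (hΓ₂ : 0 ≤ Γ₂) (hf : ∀ s t, 0 < s → s ≤ t → t ≤ T → t ≤ 2 * s →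
      dist (f s) (f t) ≤ Γ₁ * (t - s) ^ a₁ + Γ₂ * (t - s) ^ a₂)
    {s t : ℝ} (hs : 0 < s) (hst : s ≤ t) (htT : t ≤ T) :
    dist (f s) (f t) ≤ dyadicChainConst a₁ a₂ * (Γ₁ * (t - s) ^ a₁ + Γ₂ * (t - s) ^ a₂) := by
  refine dist_le_of_dyadic_chain_of_doubling (ω := fun h => Γ₁ * h ^ a₁ + Γ₂ * h ^ a₂)
    (monotoneOn_mul_rpow_add_mul_rpow hΓ₁ hΓ₂ ha₁.le ha₂.le)
    (le_max_of_le_left (Real.rpow_nonneg (by norm_num) _)) (max_inv_two_rpow_lt_one ha₁ ha₂)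
    (fun h hh => ?_) (one_le_max_two_rpow ha₁.le)
    (fun h hh => mul_rpow_add_mul_rpow_mul_le hΓ₁ hΓ₂ zero_le_two hh.le) hf hs hst htT
  rw [div_eq_inv_mul]
  exact mul_rpow_add_mul_rpow_mul_le hΓ₁ hΓ₂ (by norm_num) hh.le

theorem dist_le_rpow_sub_of_singular_bound {τ₁ η₁ τ₂ η₂ : ℝ} (hη₁ : 0 ≤ η₁) (hη₂ : 0 ≤ η₂)
    (hΓ₁ : 0 ≤ Γ₁) (hΓ₂ : 0 ≤ Γ₂) (hf : ∀ s t, 0 < s → s ≤ t → t ≤ T →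
      dist (f s) (f t) ≤ Γ₁ * s ^ (-η₁) * (t - s) ^ τ₁ + Γ₂ * s ^ (-η₂) * (t - s) ^ τ₂)
    (s t : ℝ) (hs : 0 < s) (hst : s ≤ t) (htT : t ≤ T) (h2s : t ≤ 2 * s) :
    dist (f s) (f t) ≤ Γ₁ * (t - s) ^ (τ₁ - η₁) + Γ₂ * (t - s) ^ (τ₂ - η₂) := by
  rcases hst.eq_or_lt with rfl | hst
  · rw [dist_self]
    positivity
  have hts : t - s ≤ s := by linarith
  calc dist (f s) (f t) ≤ Γ₁ * s ^ (-η₁) * (t - s) ^ τ₁ + Γ₂ * s ^ (-η₂) * (t - s) ^ τ₂ :=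
        hf s t hs hst.le htT
    _ ≤ Γ₁ * (t - s) ^ (τ₁ - η₁) + Γ₂ * (t - s) ^ (τ₂ - η₂) := by
        rw [mul_assoc, mul_assoc]
        gcongr
        exacts [rpow_neg_mul_rpow_le_rpow_sub hη₁ (sub_pos.2 hst) hts,
          rpow_neg_mul_rpow_le_rpow_sub hη₂ (sub_pos.2 hst) hts]

end PowerChaining

universe u

theorem stmt7_general (T τ₁ η₁ τ₂ η₂ : ℝ)
    (hη₁ : 0 ≤ η₁) (hτ₁ : η₁ < τ₁) (hη₂ : 0 ≤ η₂) (hτ₂ : η₂ < τ₂) :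
    ∃ C : ℝ, 0 < C ∧
      ∀ (E : Type u) [MetricSpace E] [CompleteSpace E] (Y : ℝ → E) (Γ₁ Γ₂ : ℝ),
        0 < Γ₁ → 0 < Γ₂ →
        ContinuousOn Y (Set.Ioc 0 T) →
        (∀ s t : ℝ, 0 < s → s ≤ t → t ≤ T →
          dist (Y s) (Y t) ≤ Γ₁ * s ^ (-η₁) * (t - s) ^ τ₁ + Γ₂ * s ^ (-η₂) * (t - s) ^ τ₂) →
        ∃ Y₀ : E, Filter.Tendsto Y (nhdsWithin 0 (Set.Ioc 0 T)) (nhds Y₀) ∧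
          ∀ s t : ℝ, 0 ≤ s → s ≤ t → t ≤ T →
            dist (if s = 0 then Y₀ else Y s) (if t = 0 then Y₀ else Y t) ≤
              C * (Γ₁ * (t - s) ^ (τ₁ - η₁) + Γ₂ * (t - s) ^ (τ₂ - η₂)) := by
  have ha₁ : 0 < τ₁ - η₁ := sub_pos.2 hτ₁
  have ha₂ : 0 < τ₂ - η₂ := sub_pos.2 hτ₂
  set C := dyadicChainConst (τ₁ - η₁) (τ₂ - η₂)
  refine ⟨C, dyadicChainConst_pos ha₁ ha₂, fun E _ _ Y Γ₁ Γ₂ hΓ₁ hΓ₂ _ hY => ?_⟩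
  refine exists_tendsto_nhdsWithin_Ioc_and_dist_le
    (ω := fun h => C * (Γ₁ * h ^ (τ₁ - η₁) + Γ₂ * h ^ (τ₂ - η₂)))
    (by simpa using (tendsto_mul_rpow_add_mul_rpow ha₁ ha₂).const_mul C)
    (fun x hx y hy hxy => mul_le_mul_of_nonneg_left
      (monotoneOn_mul_rpow_add_mul_rpow hΓ₁.le hΓ₂.le ha₁.le ha₂.le hx hy hxy)
      (dyadicChainConst_pos ha₁ ha₂).le)
    fun s t hs hst htT => dist_le_dyadicChainConst_mul ha₁ ha₂ hΓ₁.le hΓ₂.le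
      (dist_le_rpow_sub_of_singular_bound hη₁ hη₂ hΓ₁.le hΓ₂.le hY) hs hst htT

theorem stmt7 (T τ₁ η₁ τ₂ η₂ : ℝ) (hT : 0 < T)
    (hη₁ : 0 ≤ η₁) (hτ₁ : η₁ < τ₁) (hη₂ : 0 ≤ η₂) (hτ₂ : η₂ < τ₂) :
    ∃ C : ℝ, 0 < C ∧
      ∀ (E : Type u) [MetricSpace E] [CompleteSpace E] (Y : ℝ → E) (Γ₁ Γ₂ : ℝ),
        0 < Γ₁ → 0 < Γ₂ →
        ContinuousOn Y (Set.Ioc 0 T) →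
        (∀ s t : ℝ, 0 < s → s ≤ t → t ≤ T →
          dist (Y s) (Y t) ≤ Γ₁ * s ^ (-η₁) * (t - s) ^ τ₁ + Γ₂ * s ^ (-η₂) * (t - s) ^ τ₂) →
        ∃ Y₀ : E, Filter.Tendsto Y (nhdsWithin 0 (Set.Ioc 0 T)) (nhds Y₀) ∧
          ∀ s t : ℝ, 0 ≤ s → s ≤ t → t ≤ T →
            dist (if s = 0 then Y₀ else Y s) (if t = 0 then Y₀ else Y t) ≤
              C * (Γ₁ * (t - s) ^ (τ₁ - η₁) + Γ₂ * (t - s) ^ (τ₂ - η₂)) :=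
  stmt7_general T τ₁ η₁ τ₂ η₂ hη₁ hτ₁ hη₂ hτ₂
end

section
/- For H ∈ (0, 1/2), d ∈ ℕ, ρ ∈ [1,∞), and 0 ≤ s < u ≤ t, one has ((t−s)^{2H} − (t−u)^{2H})^(−d/2) ≤ C((u−s)^(−Hd) + (u−s)^(−d/2)(t−u)^{d/2 − Hd}) for a constant C depending only on H and d. -/
/-!
Concavity of `x ↦ x ^ (2H)` (via Bernoulli's inequality) gives the tangent bound
`(t - s) ^ (2H) - (t - u) ^ (2H) ≥ 2H (u - s) (t - s) ^ (2H - 1)`. Raising it to the power `-d/2`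
leaves the factor `(t - s) ^ q` with `q = d/2 - Hd ≥ 0`, which splits as
`(t - s) ^ q ≤ 2 ^ q ((u - s) ^ q + (t - u) ^ q)`.
-/

namespace Real

lemma add_rpow_le_two_rpow_mul_add_rpow {p a b : ℝ} (ha : 0 ≤ a) (hb : 0 ≤ b) (hp : 0 ≤ p) :
    (a + b) ^ p ≤ 2 ^ p * (a ^ p + b ^ p) := calc
  (a + b) ^ p ≤ (2 * max a b) ^ p := by
    gcongr
    rw [two_mul]
    exact add_le_add (le_max_left a b) (le_max_right a b)
  _ = 2 ^ p * max a b ^ p := mul_rpow zero_le_two (le_max_of_le_left ha)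
  _ ≤ 2 ^ p * (a ^ p + b ^ p) := by
    gcongr
    rcases max_choice a b with h | h <;> rw [h]
    · exact le_add_of_nonneg_right (rpow_nonneg hb p)
    · exact le_add_of_nonneg_left (rpow_nonneg ha p)

lemma mul_mul_rpow_sub_one_le_rpow_sub_rpow {p a b : ℝ} (hp₀ : 0 ≤ p) (hp₁ : p ≤ 1)
    (ha : 0 < a) (hb : 0 ≤ b) :
    p * a * (a + b) ^ (p - 1) ≤ (a + b) ^ p - b ^ p := by
  have hab : 0 < a + b := by linarith
  have hx : -1 ≤ b / (a + b) - 1 := by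
    linarith [div_nonneg hb hab.le]
  have bernoulli := rpow_one_add_le_one_add_mul_self hx hp₀ hp₁
  rw [add_sub_cancel, div_rpow hb hab.le] at bernoulli
  have hpow : 0 < (a + b) ^ p := rpow_pos_of_pos hab p
  rw [div_le_iff₀ hpow] at bernoulli
  have tangent : (1 + p * (b / (a + b) - 1)) * (a + b) ^ p
      = (a + b) ^ p - p * a * (a + b) ^ (p - 1) := by
    rw [rpow_sub_one hab.ne']
    field_simp
    ring
  linarith

lemma rpow_sub_rpow_rpow_neg_le {p r a b : ℝ} (hp₀ : 0 < p) (hp₁ : p ≤ 1) (hr : 0 ≤ r)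
    (ha : 0 < a) (hb : 0 ≤ b) :
    ((a + b) ^ p - b ^ p) ^ (-r) ≤
      p ^ (-r) * 2 ^ ((1 - p) * r) * (a ^ (-(p * r)) + a ^ (-r) * b ^ ((1 - p) * r)) := by
  have hab : 0 < a + b := by linarith
  have hq : 0 ≤ (1 - p) * r := mul_nonneg (by linarith) hr
  calc ((a + b) ^ p - b ^ p) ^ (-r)
      ≤ (p * a * (a + b) ^ (p - 1)) ^ (-r) :=
        rpow_le_rpow_of_nonpos (by positivity)
          (mul_mul_rpow_sub_one_le_rpow_sub_rpow hp₀.le hp₁ ha hb) (neg_nonpos.2 hr)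
    _ = p ^ (-r) * a ^ (-r) * (a + b) ^ ((1 - p) * r) := by
        rw [mul_rpow (by positivity) (by positivity), mul_rpow hp₀.le ha.le,
          ← rpow_mul hab.le]
        ring_nf
    _ ≤ p ^ (-r) * a ^ (-r) * (2 ^ ((1 - p) * r) * (a ^ ((1 - p) * r) + b ^ ((1 - p) * r))) := by
        gcongr
        exact add_rpow_le_two_rpow_mul_add_rpow ha.le hb hq
    _ = p ^ (-r) * 2 ^ ((1 - p) * r) * (a ^ (-(p * r)) + a ^ (-r) * b ^ ((1 - p) * r)) := by
        rw [show -(p * r) = -r + (1 - p) * r by ring, rpow_add ha]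
        ring

end Real

theorem stmt10 (H : ℝ) (d : ℕ) (hH0 : 0 < H) (hH : H < 1 / 2) :
    ∃ C : ℝ, 0 < C ∧ ∀ ρ : ℝ, 1 ≤ ρ → ∀ s u t : ℝ, 0 ≤ s → s < u → u ≤ t →
      ((t - s) ^ (2 * H) - (t - u) ^ (2 * H)) ^ (-(d : ℝ) / 2) ≤
        C * ((u - s) ^ (-(H * d)) +
          (u - s) ^ (-(d : ℝ) / 2) * (t - u) ^ ((d : ℝ) / 2 - H * d)) := by
  refine ⟨(2 * H) ^ (-(d : ℝ) / 2) * 2 ^ ((d : ℝ) / 2 - H * d), by positivity, ?_⟩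
  intro ρ _ s u t _ hsu hut
  have key := Real.rpow_sub_rpow_rpow_neg_le (p := 2 * H) (r := (d : ℝ) / 2) (by linarith)
    (by linarith) (by positivity) (sub_pos.2 hsu) (sub_nonneg.2 hut)
  rwa [sub_add_sub_cancel', ← neg_div, show 2 * H * ((d : ℝ) / 2) = H * d by ring,
    show (1 - 2 * H) * ((d : ℝ) / 2) = d / 2 - H * d by ring] at key
end
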